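/- Let W ∈ ℝ^{n×ℓ} be a real matrix factored as W = U Σ Vᵀ with U ∈ ℝ^{n×m}, Σ ∈ ℝ^{m×m}, V ∈ ℝ^{ℓ×m}. Given a new sample vector u ∈ ℝⁿ, set c := Uᵀu, r̂ := u − Uc, ρ := ‖r̂‖₂, and assume r̂ ≠ 0, and let r := r̂/ρ. Then the augmented matrix obtained by appending u as a new last column to W admits the exact factorization [W | u] = [U | r] · [[Σ, c],[0, ρ]] · [[V, 0],[0, 1]]ᵀ, where [U | r] ∈ ℝ^{n×(m+1)} appends r as last column to U, [[Σ, c],[0, ρ]] ∈ ℝ^{(m+1)×(m+1)} is the block matrix with blocks Σ, c, zero row and scalar ρ, and [[V,0],[0,1]] ∈ ℝ^{(ℓ+1)×(m+1)} is the block-diagonal padding of V by the 1×1 identity. -/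

import Mathlib

/-!
Block multiplication collapses `[U | r] · [[Σ, c], [0, ρ]] · [[V, 0], [0, 1]]ᵀ` to
`[U Σ Vᵀ | U c + ρ r]`, so everything reduces to the last column: `ρ r = ‖r̂‖ ‖r̂‖⁻¹ r̂ = r̂`
and `U c + r̂ = u` by definition of the residual.
-/

open Matrix MeasureTheory

def appendCol {n ℓ : ℕ} (W : Matrix (Fin n) (Fin ℓ) ℝ) (u : Fin n → ℝ) :
    Matrix (Fin n) (Fin ℓ ⊕ Unit) ℝ :=
  Matrix.of fun i => Sum.elim (W i) fun _ => u i

section appendCol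

variable {n k p : ℕ}

lemma appendCol_eq_fromCols (A : Matrix (Fin n) (Fin k) ℝ) (x : Fin n → ℝ) :
    appendCol A x = fromCols A (replicateCol Unit x) := by
  ext i (j | j) <;> rfl

lemma appendCol_mul_fromBlocks (A : Matrix (Fin n) (Fin k) ℝ) (x : Fin n → ℝ)
    (B : Matrix (Fin k) (Fin p) ℝ) (y : Fin k → ℝ) (a : ℝ) :
    appendCol A x *
        (fromBlocks B (replicateCol Unit y) 0 (of fun _ _ => a) :
          Matrix (Fin k ⊕ Unit) (Fin p ⊕ Unit) ℝ) =
      appendCol (A * B) (A *ᵥ y + a • x) := by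
  rw [appendCol_eq_fromCols, appendCol_eq_fromCols, fromCols_mul_fromBlocks, Matrix.mul_zero,
    add_zero]
  congr 1
  ext i _
  simp [mulVec, dotProduct, Matrix.mul_apply, mul_comm]

lemma appendCol_mul_transpose_fromBlocks_one (A : Matrix (Fin n) (Fin k) ℝ) (x : Fin n → ℝ)
    (V : Matrix (Fin p) (Fin k) ℝ) :
    appendCol A x * (fromBlocks V 0 0 1 : Matrix (Fin p ⊕ Unit) (Fin k ⊕ Unit) ℝ)ᵀ =
      appendCol (A * Vᵀ) x := by
  rw [appendCol_eq_fromCols, appendCol_eq_fromCols, fromBlocks_transpose, fromCols_mul_fromBlocks]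
  simp

end appendCol

theorem norm_smul_inv_norm_smul {E : Type*} [NormedAddCommGroup E] [Module ℝ E] (x : E) :
    ‖x‖ • ‖x‖⁻¹ • x = x := by
  rcases eq_or_ne x 0 with rfl | hx
  · simp
  · exact smul_inv_smul₀ (norm_ne_zero_iff.mpr hx) x

theorem online_svd_pad_exact_general {n ℓ m : ℕ}
    (W : Matrix (Fin n) (Fin ℓ) ℝ) (U : Matrix (Fin n) (Fin m) ℝ)
    (S : Matrix (Fin m) (Fin m) ℝ) (V : Matrix (Fin ℓ) (Fin m) ℝ)
    (hW : W = U * S * Vᵀ)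
    (u : Fin n → ℝ)
    (c : Fin m → ℝ)
    (rhat : Fin n → ℝ) (hrhat : rhat = u - U *ᵥ c)
    (ρ : ℝ) (hρ : ρ = ‖(WithLp.equiv 2 (Fin n → ℝ)).symm rhat‖)
    (r : Fin n → ℝ) (hr : r = ρ⁻¹ • rhat) :
    appendCol W u =
      appendCol U r *
        Matrix.fromBlocks S (Matrix.of fun i (_ : Unit) => c i) 0
          (Matrix.of fun (_ : Unit) (_ : Unit) => ρ) *
        (Matrix.fromBlocks V 0 0 1)ᵀ := by
  have hρr : ρ • r = rhat := by
    subst hρ hr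
    simpa using congrArg WithLp.ofLp (norm_smul_inv_norm_smul (WithLp.toLp 2 rhat))
  calc appendCol W u = appendCol (U * S * Vᵀ) (U *ᵥ c + ρ • r) := by
        rw [hW, hρr, hrhat, add_sub_cancel]
    _ = _ := by
      rw [← appendCol_mul_transpose_fromBlocks_one, ← appendCol_mul_fromBlocks]
      -- Without type ascriptions, the pending numerals `0`, `1` let the outer product elaborate
      -- through the default `HMul` instance of `CStarMatrix`; it is the matrix product up to `rfl`.
      rfl

/-- One update step of Brand's online SVD is exact: appending a new sample
column `u` to `W = U Σ Vᵀ` gives the padded factorization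
`[W | u] = [U | r] · [[Σ, c],[0, ρ]] · [[V, 0],[0, 1]]ᵀ`. -/
theorem online_svd_pad_exact {n ℓ m : ℕ}
    (W : Matrix (Fin n) (Fin ℓ) ℝ) (U : Matrix (Fin n) (Fin m) ℝ)
    (S : Matrix (Fin m) (Fin m) ℝ) (V : Matrix (Fin ℓ) (Fin m) ℝ)
    (hW : W = U * S * Vᵀ)
    (u : Fin n → ℝ)
    (c : Fin m → ℝ) (hc : c = Uᵀ *ᵥ u)
    (rhat : Fin n → ℝ) (hrhat : rhat = u - U *ᵥ c)
    (hne : rhat ≠ 0)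
    (ρ : ℝ) (hρ : ρ = ‖(WithLp.equiv 2 (Fin n → ℝ)).symm rhat‖)
    (r : Fin n → ℝ) (hr : r = ρ⁻¹ • rhat) :
    appendCol W u =
      appendCol U r *
        Matrix.fromBlocks S (Matrix.of fun i (_ : Unit) => c i) 0
          (Matrix.of fun (_ : Unit) (_ : Unit) => ρ) *
        (Matrix.fromBlocks V 0 0 1)ᵀ :=
  online_svd_pad_exact_general W U S V hW u c rhat hrhat ρ hρ r hr
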